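/- Let γ_p be the standard Gaussian measure on ℝ^p, let H = {x ∈ ℝ^p : ⟨x, v⟩ = c} be a hyperplane with unit normal vector v and c ≥ 0, let F ⊂ H be a Borel set, and let N_F(δ) = {x + t v : x ∈ F, 0 < t ≤ δ} for δ > 0. Then lim_{δ ↓ 0} γ_p(N_F(δ))/δ = ∫_F φ_p dσ, where σ is the (p−1)-dimensional Hausdorff measure restricted to H and φ_p is the standard Gaussian density. -/

import Mathlib

open MeasureTheory Filter
open scoped RealInnerProductSpace Topology

/-- The standard Gaussian measure `γ_p` on `ℝ^p`, given by its density
`φ_p(x) = (2π)^{−p/2} e^{−‖x‖²/2}` with respect to Lebesgue measure. -/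
noncomputable def stdGaussian (p : ℕ) : Measure (EuclideanSpace ℝ (Fin p)) :=
  volume.withDensity fun x =>
    ENNReal.ofReal ((2 * Real.pi) ^ (-(p : ℝ) / 2) * Real.exp (-‖x‖ ^ 2 / 2))

/-- The standard Gaussian density `φ_p(x) = (2π)^{−p/2} e^{−‖x‖²/2}` on `ℝ^p`. -/
noncomputable def stdGaussianDensity (p : ℕ) (x : EuclideanSpace ℝ (Fin p)) : ℝ :=
  (2 * Real.pi) ^ (-(p : ℝ) / 2) * Real.exp (-‖x‖ ^ 2 / 2)

/-- The standard surface (Lebesgue) measure on the hyperplane `{x : ⟨x, v⟩ = c}` with unit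
normal `v`: the pushforward of the canonical Lebesgue measure on the orthogonal complement of
`v` under the affine isometry `w ↦ c • v + w` onto the hyperplane.  (For sets contained in the
hyperplane it coincides with the (`p−1`)-dimensional Hausdorff measure, suitably normalized.) -/
noncomputable def surfMeasure {p : ℕ} (v : EuclideanSpace ℝ (Fin p)) (c : ℝ) :
    Measure (EuclideanSpace ℝ (Fin p)) :=
  Measure.map (fun w : (Submodule.span ℝ {v})ᗮ => c • v + (w : EuclideanSpace ℝ (Fin p))) volume

/-!
Write points of `ℝ^p` as `t • v + w` with `w ⊥ v`. This splitting `ℝ × vᗮ ≃ ℝ^p` preserves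
Lebesgue measure, turns `N_F(δ)` into the box `(c, c + δ] × F'` (where `F'` is `F` seen in
`vᗮ`-coordinates) and factors the Gaussian density as `e^{-t²/2} φ_p(w)`. Hence
`γ_p(N_F(δ)) = (∫_c^{c+δ} e^{-t²/2} dt) · ∫_{F'} φ_p`, while `∫_F φ_p dσ = e^{-c²/2} ∫_{F'} φ_p`,
and the fundamental theorem of calculus gives the limit. Both sides are `toReal`s of lower
integrals, so no integrability of the Gaussian is needed.
-/

open Set

def normalTranslate {E : Type*} [AddCommGroup E] [Module ℝ E] (F : Set E) (v : E) (δ : ℝ) :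
    Set E :=
  {y | ∃ x ∈ F, ∃ t : ℝ, 0 < t ∧ t ≤ δ ∧ y = x + t • v}

def orthogonalSlice {E : Type*} [NormedAddCommGroup E] [InnerProductSpace ℝ E] (v : E) (c : ℝ)
    (F : Set E) : Set (ℝ ∙ v)ᗮ :=
  (fun w : (ℝ ∙ v)ᗮ => c • v + (w : E)) ⁻¹' F

section OrthogonalSplitting

variable {E : Type*} [NormedAddCommGroup E] [InnerProductSpace ℝ E] [FiniteDimensional ℝ E]
  [MeasurableSpace E] [BorelSpace E] {v : E}

noncomputable def smulAddOrthogonalEquiv (hv : ‖v‖ = 1) : ℝ × (ℝ ∙ v)ᗮ ≃ᵐ E :=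
  (MeasurableEquiv.toLp 2 _).trans
    ((LinearIsometryEquiv.withLpProdCongr 2 (LinearIsometryEquiv.toSpanUnitSingleton v hv)
      (LinearIsometryEquiv.refl ℝ _)).trans (ℝ ∙ v).orthogonalDecomposition.symm).toMeasurableEquiv

@[simp]
lemma smulAddOrthogonalEquiv_apply (hv : ‖v‖ = 1) (q : ℝ × (ℝ ∙ v)ᗮ) :
    smulAddOrthogonalEquiv hv q = q.1 • v + q.2 := rfl

lemma measurePreserving_smulAddOrthogonalEquiv (hv : ‖v‖ = 1) :
    MeasurePreserving (smulAddOrthogonalEquiv hv) (volume.prod volume) volume :=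
  (WithLp.volume_preserving_toLp _ _).trans (LinearIsometryEquiv.measurePreserving _)

lemma smulAddOrthogonalEquiv_preimage_normalTranslate (hv : ‖v‖ = 1) {F : Set E} {c : ℝ}
    (hF : F ⊆ {x | ⟪x, v⟫ = c}) (δ : ℝ) :
    smulAddOrthogonalEquiv hv ⁻¹' normalTranslate F v δ =
      Ioc c (c + δ) ×ˢ orthogonalSlice v c F := by
  have hvv : ⟪v, v⟫ = 1 := by rw [real_inner_self_eq_norm_sq, hv, one_pow]
  ext ⟨t, w⟩
  have hwv : ⟪(w : E), v⟫ = 0 := Submodule.mem_orthogonal_singleton_iff_inner_left.mp w.2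
  simp only [normalTranslate, orthogonalSlice, mem_preimage, smulAddOrthogonalEquiv_apply,
    mem_ofPred_eq, mem_prod, mem_Ioc]
  constructor
  · rintro ⟨x, hxF, s, hs, hsδ, hx⟩
    have hts : t = c + s := by
      have hxv : ⟪x, v⟫ = c := hF hxF
      have := congrArg (⟪·, v⟫) hx
      simp only [inner_add_left, real_inner_smul_left, hvv, hwv, hxv] at this
      linarith
    obtain rfl : x = c • v + w := by
      rw [← add_right_cancel_iff (a := s • v), ← hx, hts, add_smul]
      abel
    exact ⟨⟨by linarith, by linarith⟩, hxF⟩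
  · rintro ⟨⟨hct, htc⟩, hw⟩
    exact ⟨_, hw, t - c, by linarith, by linarith, by module⟩

end OrthogonalSplitting

lemma tendsto_intervalIntegral_div_nhdsGT {f : ℝ → ℝ} (hf : Continuous f) (c : ℝ) :
    Tendsto (fun δ => (∫ t in c..c + δ, f t) / δ) (𝓝[>] 0) (𝓝 (f c)) := by
  refine (hf.integral_hasStrictDerivAt c c).hasDerivAt.tendsto_slope_zero_right.congr fun δ => ?_
  rw [intervalIntegral.integral_same, sub_zero, smul_eq_mul, inv_mul_eq_div]

section StdGaussian

variable {p : ℕ} {v : EuclideanSpace ℝ (Fin p)}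

@[fun_prop]
lemma continuous_stdGaussianDensity : Continuous (stdGaussianDensity p) := by
  unfold stdGaussianDensity
  fun_prop

lemma stdGaussianDensity_nonneg (x : EuclideanSpace ℝ (Fin p)) : 0 ≤ stdGaussianDensity p x := by
  unfold stdGaussianDensity
  positivity

lemma stdGaussianDensity_smul_add (hv : ‖v‖ = 1) {w : EuclideanSpace ℝ (Fin p)} (hw : ⟪v, w⟫ = 0)
    (t : ℝ) : stdGaussianDensity p (t • v + w) = Real.exp (-t ^ 2 / 2) * stdGaussianDensity p w := by
  have hpyth : ‖t • v + w‖ ^ 2 = t ^ 2 + ‖w‖ ^ 2 := by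
    rw [sq, norm_add_sq_eq_norm_sq_add_norm_sq_real (by rw [real_inner_smul_left, hw, mul_zero]),
      norm_smul, hv, Real.norm_eq_abs, mul_one, ← sq, ← sq, sq_abs]
  rw [stdGaussianDensity, stdGaussianDensity, hpyth, neg_add, add_div, Real.exp_add]
  ring

lemma stdGaussian_normalTranslate (hv : ‖v‖ = 1) {F : Set (EuclideanSpace ℝ (Fin p))} {c : ℝ}
    (hF : F ⊆ {x | ⟪x, v⟫ = c}) (δ : ℝ) :
    stdGaussian p (normalTranslate F v δ) =
      (∫⁻ t in Ioc c (c + δ), ENNReal.ofReal (Real.exp (-t ^ 2 / 2))) *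
        ∫⁻ w in orthogonalSlice v c F, ENNReal.ofReal (stdGaussianDensity p w) := by
  set e := smulAddOrthogonalEquiv hv
  have hdensity (q : ℝ × (ℝ ∙ v)ᗮ) : ENNReal.ofReal (stdGaussianDensity p (e q)) =
      ENNReal.ofReal (Real.exp (-q.1 ^ 2 / 2)) * ENNReal.ofReal (stdGaussianDensity p q.2) := by
    rw [smulAddOrthogonalEquiv_apply, stdGaussianDensity_smul_add hv
      (Submodule.mem_orthogonal_singleton_iff_inner_right.mp q.2.2),
      ENNReal.ofReal_mul (Real.exp_pos _).le]
  calc stdGaussian p (normalTranslate F v δ)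
      = ∫⁻ y in normalTranslate F v δ, ENNReal.ofReal (stdGaussianDensity p y) :=
        withDensity_apply' _ _
    _ = ∫⁻ q in e ⁻¹' normalTranslate F v δ, ENNReal.ofReal (stdGaussianDensity p (e q))
          ∂(volume.prod volume) :=
        ((measurePreserving_smulAddOrthogonalEquiv hv).setLIntegral_comp_preimage_emb
          e.measurableEmbedding _ _).symm
    _ = _ := by
      rw [smulAddOrthogonalEquiv_preimage_normalTranslate hv hF, ← Measure.prod_restrict]
      simp_rw [hdensity]
      refine lintegral_prod_mul (f := fun t => ENNReal.ofReal (Real.exp (-t ^ 2 / 2)))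
        (g := fun w : (ℝ ∙ v)ᗮ => ENNReal.ofReal (stdGaussianDensity p w)) ?_ ?_ <;> fun_prop

lemma stdGaussian_normalTranslate_toReal (hv : ‖v‖ = 1) {F : Set (EuclideanSpace ℝ (Fin p))}
    {c : ℝ} (hF : F ⊆ {x | ⟪x, v⟫ = c}) {δ : ℝ} (hδ : 0 ≤ δ) :
    (stdGaussian p (normalTranslate F v δ)).toReal =
      (∫ t in c..c + δ, Real.exp (-t ^ 2 / 2)) *
        ∫ w in orthogonalSlice v c F, stdGaussianDensity p w := by
  rw [stdGaussian_normalTranslate hv hF, ENNReal.toReal_mul,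
    intervalIntegral.integral_of_le (by linarith),
    integral_eq_lintegral_of_nonneg_ae (.of_forall fun _ => (Real.exp_pos _).le) (by fun_prop),
    integral_eq_lintegral_of_nonneg_ae (.of_forall fun _ => stdGaussianDensity_nonneg _)
      (by fun_prop)]

lemma setIntegral_surfMeasure_stdGaussianDensity (hv : ‖v‖ = 1) (c : ℝ)
    (F : Set (EuclideanSpace ℝ (Fin p))) :
    ∫ x in F, stdGaussianDensity p x ∂surfMeasure v c =
      Real.exp (-c ^ 2 / 2) *
        ∫ w in orthogonalSlice v c F, stdGaussianDensity p w := by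
  have hemb : MeasurableEmbedding fun w : (ℝ ∙ v)ᗮ => c • v + (w : EuclideanSpace ℝ (Fin p)) :=
    (smulAddOrthogonalEquiv hv).measurableEmbedding.comp (measurableEmbedding_prodMk_left c)
  rw [surfMeasure, hemb.setIntegral_map, orthogonalSlice, ← integral_const_mul]
  congr 1 with w
  exact stdGaussianDensity_smul_add hv (Submodule.mem_orthogonal_singleton_iff_inner_right.mp w.2) c

end StdGaussian

theorem tendsto_gaussian_normal_translate_div_general {p : ℕ}
    (v : EuclideanSpace ℝ (Fin p)) (hv : ‖v‖ = 1) (c : ℝ)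
    (F : Set (EuclideanSpace ℝ (Fin p)))
    (hFH : F ⊆ {x | ⟪x, v⟫ = c}) :
    Tendsto
      (fun δ : ℝ =>
        (stdGaussian p {y | ∃ x ∈ F, ∃ t : ℝ, 0 < t ∧ t ≤ δ ∧ y = x + t • v}).toReal / δ)
      (𝓝[>] 0) (𝓝 (∫ x in F, stdGaussianDensity p x ∂(surfMeasure v c))) := by
  rw [setIntegral_surfMeasure_stdGaussianDensity hv]
  have hcont : Continuous fun t : ℝ => Real.exp (-t ^ 2 / 2) := by fun_prop
  refine ((tendsto_intervalIntegral_div_nhdsGT hcont c).mul_const _).congr' ?_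
  filter_upwards [self_mem_nhdsWithin] with δ hδ
  rw [div_mul_eq_mul_div, ← stdGaussian_normalTranslate_toReal hv hFH (le_of_lt hδ)]
  rfl

/-- For a Borel subset `F` of the hyperplane `H = {x : ⟨x, v⟩ = c}` (with `v`
a unit vector, `c ≥ 0`) and `N_F(δ) = {x + t v : x ∈ F, 0 < t ≤ δ}`, one has
`lim_{δ ↓ 0} γ_p(N_F(δ))/δ = ∫_F φ_p dσ`, where `σ` is the surface measure on `H`. -/
theorem tendsto_gaussian_normal_translate_div {p : ℕ} (hp : 1 ≤ p)
    (v : EuclideanSpace ℝ (Fin p)) (hv : ‖v‖ = 1) (c : ℝ) (hc : 0 ≤ c)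
    (F : Set (EuclideanSpace ℝ (Fin p))) (hFmeas : MeasurableSet F)
    (hFH : F ⊆ {x | ⟪x, v⟫ = c}) :
    Tendsto
      (fun δ : ℝ =>
        (stdGaussian p {y | ∃ x ∈ F, ∃ t : ℝ, 0 < t ∧ t ≤ δ ∧ y = x + t • v}).toReal / δ)
      (𝓝[>] 0) (𝓝 (∫ x in F, stdGaussianDensity p x ∂(surfMeasure v c))) :=
  tendsto_gaussian_normal_translate_div_general v hv c F hFH
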